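/- arXiv:0903.5217 — 3 statements merged into one kernel-verified Lean document; each statement's English description precedes it below -/
import Mathlib

section
/- In the differential graded algebra Λ = F_2[τ][h10, h11, h12, h20, h21, h30] with d(h10)=d(h11)=d(h12)=0, d(h20)=h10·h11, d(h21)=h11·h12, d(h30)=h10·h21+h20·h12, one has d(h20·h30) = h12·h20² + h10·(h20·h21 + h11·h30). Hence the cohomology class of h12·b20 equals that of h10·h0(1), where b20 = h20² and h0(1) = h20h21 + h11h30. -/
open MvPolynomial

noncomputable section

/-- `F₂[τ]` -/
abbrev Ftau : Type := Polynomial (ZMod 2)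

/-- The polynomial algebra `Λ = F₂[τ][h10, h11, h12, h20, h21, h30]`. -/
abbrev Lam : Type := MvPolynomial (Fin 6) Ftau

def h10 : Lam := X 0
def h11 : Lam := X 1
def h12 : Lam := X 2
def h20 : Lam := X 3
def h21 : Lam := X 4
def h30 : Lam := X 5

/-- The unique `F₂[τ]`-linear derivation on `Λ` with the prescribed values on generators. -/
def dMay : Derivation Ftau Lam Lam :=
  MvPolynomial.mkDerivation Ftau
    ![0, 0, 0, h10 * h11, h11 * h12, h10 * h21 + h20 * h12]

theorem dMay_h20 : dMay h20 = h10 * h11 :=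
  mkDerivation_X _ _ 3

theorem dMay_h30 : dMay h30 = h10 * h21 + h20 * h12 :=
  mkDerivation_X _ _ 5

/-- `d(h20·h30) = h12·h20² + h10·(h20·h21 + h11·h30)`, so in cohomology
`h2·b20 = h0·h0(1)`. -/
theorem dMay_h20_h30 :
    dMay (h20 * h30) = h12 * h20 ^ 2 + h10 * (h20 * h21 + h11 * h30) := by
  rw [Derivation.leibniz, dMay_h20, dMay_h30, smul_eq_mul, smul_eq_mul]
  ring

end
end

section
/- In the differential graded algebra Λ = F_2[τ][h10, h11, h12, h20, h21, h30] with d(h10)=d(h11)=d(h12)=0, d(h20)=h10·h11, d(h21)=h11·h12, d(h30)=h10·h21+h20·h12, one has d(h21·h30) = h10·h21² + h12·(h20·h21 + h11·h30). Hence in cohomology h12·h0(1) = h10·b21, where b21 = h21² and h0(1) = h20h21 + h11h30. -/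
open MvPolynomial

noncomputable section

theorem dMay_h21 : dMay h21 = h11 * h12 := by
  simp [dMay, h21, mkDerivation_X]

/-- `d(h21·h30) = h10·h21² + h12·(h20·h21 + h11·h30)`, so in cohomology
`h2·h0(1) = h0·b21`. -/
theorem dMay_h21_h30 :
    dMay (h21 * h30) = h10 * h21 ^ 2 + h12 * (h20 * h21 + h11 * h30) := by
  rw [Derivation.leibniz, dMay_h21, dMay_h30, smul_eq_mul, smul_eq_mul]
  ring

end
end

section
/- Let R be a commutative F_2[τ]-algebra containing elements h0, h1, h2, b20, b21, b30, h0(1) satisfying h0h1 = 0, h1h2 = 0, h2·b20 = h0·h0(1), h2·h0(1) = h0·b21, and h0(1)² = b20b21 + h1²b30. Then (τh1³ + h0²h2)·b21 + b20·h2³ + h1²·(τ·h1·b21) = 0 in R; that is, the May d2 differential (with d2(b20) = τh1³+h0²h2, d2(b21) = h2³, d2(b30) = τh1b21, d2 zero on h0, h1, h2, d2(h0(1)) = h0h2²) is compatible with the relation h0(1)² = b20b21 + h1²b30. -/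
theorem b20_mul_h2_pow_three {R : Type*} [CommSemiring R] {h0 h2 b20 b21 h01 : R}
    (r3 : h2 * b20 = h0 * h01) (r4 : h2 * h01 = h0 * b21) :
    b20 * h2 ^ 3 = h0 ^ 2 * h2 * b21 :=
  calc b20 * h2 ^ 3 = h2 ^ 2 * (h2 * b20) := by ring
    _ = h0 * h2 * (h2 * h01) := by rw [r3]; ring
    _ = h0 ^ 2 * h2 * b21 := by rw [r4]; ring

theorem d2_compatible_rel5_general (R : Type) [CommRing R] (h2R : (2 : R) = 0)
    (τ h0 h1 h2 b20 b21 h01 : R)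
    (r3 : h2 * b20 = h0 * h01) (r4 : h2 * h01 = h0 * b21) :
    (τ * h1 ^ 3 + h0 ^ 2 * h2) * b21 + b20 * h2 ^ 3 + h1 ^ 2 * (τ * h1 * b21) = 0 := by
  rw [b20_mul_h2_pow_three r3 r4]
  -- both `τ·h1³·b21` and `h0²·h2·b21` now occur twice
  linear_combination (τ * h1 ^ 3 * b21 + h0 ^ 2 * h2 * b21) * h2R

/-- In a commutative `F₂[τ]`-algebra `R` with elements satisfying the relations
presenting the `E₂`-term of the motivic May spectral sequence for `A(2)`, the May `d₂`
differential is compatible with the relation `h0(1)² = b20·b21 + h1²·b30`: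
`(τ·h1³ + h0²·h2)·b21 + b20·h2³ + h1²·(τ·h1·b21) = 0`. -/
theorem d2_compatible_rel5 (R : Type) [CommRing R] (h2R : (2 : R) = 0)
    (τ h0 h1 h2 b20 b21 b30 h01 : R)
    (r1 : h0 * h1 = 0) (r2 : h1 * h2 = 0)
    (r3 : h2 * b20 = h0 * h01) (r4 : h2 * h01 = h0 * b21)
    (r5 : h01 ^ 2 = b20 * b21 + h1 ^ 2 * b30) :
    (τ * h1 ^ 3 + h0 ^ 2 * h2) * b21 + b20 * h2 ^ 3 + h1 ^ 2 * (τ * h1 * b21) = 0 :=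
  d2_compatible_rel5_general R h2R τ h0 h1 h2 b20 b21 h01 r3 r4
end
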